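/- arXiv:1209.5057 — 2 statements merged into one kernel-verified Lean document; each statement's English description precedes it below -/
import Mathlib

section
/- Let (M, μ) be a finite measure space, F: M → M a bi-measurable bijection, and suppose there is a unitary operator U on L²(M, μ) satisfying U·M_f = M_{f∘F⁻¹}·U for every bounded measurable function f (where M_f denotes multiplication by f). Then the pushforward measure μ_F defined by μ_F(A) = μ(F(A)) is absolutely continuous with respect to μ. -/
/-!
A set `s` of measure zero makes the multiplication operator by its indicator vanish, so the
intertwining relation gives `1_{F(s)} · U ξ = U 0 = 0` for every `ξ`. Since `U` is onto, `U ξ` can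
be the constant function `1`, which forces `μ (F s) = 0`.
-/

open MeasureTheory

section

variable {M : Type*} [MeasurableSpace M] {μ : Measure M} {p : ENNReal}

/-- `U ∘ M_f = M_{f ∘ F⁻¹} ∘ U` on `Lp ℂ p μ`, for every bounded measurable `f`. -/
def IntertwinesMul (U : Lp ℂ p μ → Lp ℂ p μ) (F : M ≃ᵐ M) : Prop :=
  ∀ f : M → ℂ, Measurable f → (∃ C, ∀ x, ‖f x‖ ≤ C) →
    ∀ ξ η : Lp ℂ p μ, (∀ᵐ m ∂μ, (η : M → ℂ) m = f m * (ξ : M → ℂ) m) →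
      ∀ᵐ m ∂μ, (U η : M → ℂ) m = f (F.symm m) * (U ξ : M → ℂ) m

namespace IntertwinesMul

variable {U : Lp ℂ p μ → Lp ℂ p μ} {F : M ≃ᵐ M} {s : Set M}

theorem indicator_preimage_mul_ae_eq_zero (hU : IntertwinesMul U F) (h0 : U 0 = 0)
    (hs : MeasurableSet s) (hμs : μ s = 0) (ξ : Lp ℂ p μ) :
    (F.symm ⁻¹' s).indicator 1 * (U ξ : M → ℂ) =ᵐ[μ] 0 := by
  have hbdd : ∃ C, ∀ x, ‖s.indicator (1 : M → ℂ) x‖ ≤ C :=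
    ⟨1, fun x => by by_cases hx : x ∈ s <;> simp [hx]⟩
  have hzero : ∀ᵐ m ∂μ, ((0 : Lp ℂ p μ) : M → ℂ) m = s.indicator 1 m * (ξ : M → ℂ) m := by
    filter_upwards [Lp.coeFn_zero ℂ p μ, measure_eq_zero_iff_ae_notMem.mp hμs] with m hm hms
    rw [hm]
    simp [hms]
  have hU0 : (U 0 : M → ℂ) =ᵐ[μ] 0 := by
    rw [h0]
    exact Lp.coeFn_zero ℂ p μ
  filter_upwards [hU _ (measurable_const.indicator hs) hbdd ξ 0 hzero, hU0] with m hm hm0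
  rw [hm0] at hm
  exact hm.symm

theorem measure_preimage_symm_eq_zero [IsFiniteMeasure μ] (hU : IntertwinesMul U F)
    (h0 : U 0 = 0) (hsurj : Function.Surjective U) (hs : MeasurableSet s) (hμs : μ s = 0) :
    μ (F.symm ⁻¹' s) = 0 := by
  obtain ⟨ξ, hξ⟩ := hsurj (Lp.const p μ (1 : ℂ))
  have hind : (F.symm ⁻¹' s).indicator (1 : M → ℂ) =ᵐ[μ] 0 := by
    filter_upwards [hU.indicator_preimage_mul_ae_eq_zero h0 hs hμs ξ,
      hξ ▸ Lp.coeFn_const p μ (1 : ℂ)] with m hm hm1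
    simpa [hm1] using hm
  simpa using Set.indicator_ae_eq_zero.mp hind

theorem map_symm_absolutelyContinuous [IsFiniteMeasure μ] (hU : IntertwinesMul U F)
    (h0 : U 0 = 0) (hsurj : Function.Surjective U) : μ.map F.symm ≪ μ :=
  Measure.AbsolutelyContinuous.mk fun s hs hμs => by
    rw [Measure.map_apply F.symm.measurable hs]
    exact hU.measure_preimage_symm_eq_zero h0 hsurj hs hμs

end IntertwinesMul

end

/-- If a bi-measurable bijection F of a finite measure space is implemented
by a unitary U on L²(μ) intertwining multiplication operators (U·M_f = M_{f∘F⁻¹}·U),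
then the pushforward measure μ_F(A) = μ(F(A)) is absolutely continuous w.r.t. μ. -/
theorem pushforward_absolutelyContinuous {M : Type*} [MeasurableSpace M]
    (μ : Measure M) [IsFiniteMeasure μ] (F : M ≃ᵐ M)
    (U : Lp ℂ 2 μ ≃ₗᵢ[ℂ] Lp ℂ 2 μ)
    (hU : ∀ f : M → ℂ, Measurable f → (∃ C, ∀ x, ‖f x‖ ≤ C) →
      ∀ ξ η : Lp ℂ 2 μ, (∀ᵐ m ∂μ, (η : M → ℂ) m = f m * (ξ : M → ℂ) m) →
        ∀ᵐ m ∂μ, (U η : M → ℂ) m = f (F.symm m) * (U ξ : M → ℂ) m) :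
    μ.map F.symm ≪ μ :=
  IntertwinesMul.map_symm_absolutelyContinuous (U := U) hU (map_zero U) U.surjective
end

section
/- Let (M, μ) be a finite measure space and F: M → M a bi-measurable bijection implemented as in the intertwining hypothesis (there is a unitary U on L²(M,μ) with U·M_f = M_{f∘F⁻¹}·U for all bounded measurable f). Then μ and the pushforward measure μ_F(A) = μ(F(A)) are mutually absolutely continuous (equivalent measures). -/
/-!
Test the intertwining relation on indicators `1_A`. If `μ A = 0`, then `1_A · ξ = 0` in `L²`,
so `0 = U 0 = (1_A ∘ F⁻¹) · U ξ`; choosing `ξ = U⁻¹ 1` shows that `F⁻¹ m ∉ A` for a.e. `m`.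
Conversely, if `F⁻¹ m ∉ A` for a.e. `m`, then `U (1_A · 1) = (1_A ∘ F⁻¹) · U 1 = 0`, and since `U`
is injective, `1_A = 0` in `L²`, i.e. `μ A = 0`.
-/

open MeasureTheory

lemma ae_indicator_one_comp_eq_zero_iff {α β M₀ : Type*} [MeasurableSpace α] [MulZeroOneClass M₀]
    [Nontrivial M₀] {μ : Measure α} {s : Set β} {g : α → β} :
    (∀ᵐ x ∂μ, s.indicator (1 : β → M₀) (g x) = 0) ↔ μ (g ⁻¹' s) = 0 := by
  simp only [Set.indicator_eq_zero_iff_notMem]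
  exact measure_eq_zero_iff_ae_notMem.symm

namespace MeasureTheory

variable {M : Type*} [MeasurableSpace M] {μ : Measure M}

/-- `U M_f = M_{f ∘ F⁻¹} U` for bounded measurable `f`, with `η = M_f ξ` read pointwise a.e. -/
def Intertwines (μ : Measure M) (F : M ≃ᵐ M) (U : Lp ℂ 2 μ ≃ₗᵢ[ℂ] Lp ℂ 2 μ) : Prop :=
  ∀ f : M → ℂ, Measurable f → (∃ C, ∀ x, ‖f x‖ ≤ C) →
    ∀ ξ η : Lp ℂ 2 μ, (∀ᵐ m ∂μ, (η : M → ℂ) m = f m * (ξ : M → ℂ) m) →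
      ∀ᵐ m ∂μ, (U η : M → ℂ) m = f (F.symm m) * (U ξ : M → ℂ) m

namespace Intertwines

variable {F : M ≃ᵐ M} {U : Lp ℂ 2 μ ≃ₗᵢ[ℂ] Lp ℂ 2 μ}

lemma indicator (hU : Intertwines μ F U) {A : Set M} (hA : MeasurableSet A) {ξ η : Lp ℂ 2 μ}
    (h : ∀ᵐ m ∂μ, (η : M → ℂ) m = A.indicator 1 m * (ξ : M → ℂ) m) :
    ∀ᵐ m ∂μ, (U η : M → ℂ) m = A.indicator 1 (F.symm m) * (U ξ : M → ℂ) m :=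
  hU _ (measurable_one.indicator hA)
    ⟨1, fun x => (norm_indicator_le_norm_self _ x).trans (by simp)⟩ ξ η h

lemma map_symm_absolutelyContinuous [IsFiniteMeasure μ] (hU : Intertwines μ F U) :
    μ.map F.symm ≪ μ := by
  refine Measure.AbsolutelyContinuous.mk fun A hA hA0 => ?_
  rw [F.symm.map_apply, ← ae_indicator_one_comp_eq_zero_iff (M₀ := ℂ)]
  have h0 : ∀ᵐ m ∂μ, ((0 : Lp ℂ 2 μ) : M → ℂ) m =
      A.indicator 1 m * (U.symm (Lp.const 2 μ 1) : M → ℂ) m := by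
    filter_upwards [Lp.coeFn_zero ℂ 2 μ,
      (ae_indicator_one_comp_eq_zero_iff (M₀ := ℂ) (g := id)).2 hA0]
      with m hzero (hnull : A.indicator (1 : M → ℂ) m = 0)
    rw [hzero, Pi.zero_apply, hnull, zero_mul]
  filter_upwards [hU.indicator hA h0, Lp.coeFn_zero ℂ 2 μ,
    Lp.coeFn_const (p := 2) (μ := μ) (1 : ℂ)] with m h hzero hone
  rwa [U.apply_symm_apply, map_zero, hzero, hone, Function.const_apply, mul_one, Pi.zero_apply,
    eq_comm] at h

lemma absolutelyContinuous_map_symm [IsFiniteMeasure μ] (hU : Intertwines μ F U) :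
    μ ≪ μ.map F.symm := by
  refine Measure.AbsolutelyContinuous.mk fun A hA hA0 => ?_
  rw [F.symm.map_apply, ← ae_indicator_one_comp_eq_zero_iff (M₀ := ℂ)] at hA0
  have hind := indicatorConstLp_coeFn (p := 2) (hs := hA) (hμs := measure_ne_top μ A) (c := (1 : ℂ))
  have hη : ∀ᵐ m ∂μ, (indicatorConstLp 2 hA (measure_ne_top μ A) (1 : ℂ) : M → ℂ) m =
      A.indicator 1 m * (Lp.const 2 μ (1 : ℂ) : M → ℂ) m := by
    filter_upwards [hind, Lp.coeFn_const (p := 2) (μ := μ) (1 : ℂ)] with m hind hone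
    rw [hind, hone, Function.const_apply, mul_one, Pi.one_def]
  have hUη : U (indicatorConstLp 2 hA (measure_ne_top μ A) 1) = 0 := Lp.ext <| by
    filter_upwards [hU.indicator hA hη, hA0, Lp.coeFn_zero ℂ 2 μ] with m h hnull hzero
    rw [h, hnull, zero_mul, hzero, Pi.zero_apply]
  rw [EmbeddingLike.map_eq_zero_iff] at hUη
  refine (ae_indicator_one_comp_eq_zero_iff (M₀ := ℂ) (g := id)).1 ?_
  filter_upwards [hind, Lp.coeFn_zero ℂ 2 μ] with m hind hzero
  rw [id, Pi.one_def, ← hind, hUη, hzero, Pi.zero_apply]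

end Intertwines

end MeasureTheory

/-- Under the intertwining hypothesis, μ and the pushforward measure
μ_F(A) = μ(F(A)) are mutually absolutely continuous (equivalent measures). -/
theorem pushforward_equivalent {M : Type*} [MeasurableSpace M]
    (μ : Measure M) [IsFiniteMeasure μ] (F : M ≃ᵐ M)
    (U : Lp ℂ 2 μ ≃ₗᵢ[ℂ] Lp ℂ 2 μ)
    (hU : ∀ f : M → ℂ, Measurable f → (∃ C, ∀ x, ‖f x‖ ≤ C) →
      ∀ ξ η : Lp ℂ 2 μ, (∀ᵐ m ∂μ, (η : M → ℂ) m = f m * (ξ : M → ℂ) m) →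
        ∀ᵐ m ∂μ, (U η : M → ℂ) m = f (F.symm m) * (U ξ : M → ℂ) m) :
    μ.map F.symm ≪ μ ∧ μ ≪ μ.map F.symm :=
  ⟨Intertwines.map_symm_absolutelyContinuous hU, Intertwines.absolutelyContinuous_map_symm hU⟩
end
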